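/- Let l ≥ 0 and let φ : (0,∞) → [0,∞) be measurable with φ(η) = 0 for η > 1, φ(η) ≤ C(1−η)^k on (0,1) for some C > 0, k > −1, and φ(η) > 0 for η in some interval (1−ε₀, 1). For j > −1 define g_j(u) = u^{−(2j+1)} ∫_u^1 φ(η)(η² − u²)^j dη for u ∈ (0,1] and g_j(u) = 0 for u > 1. Let y : [0,∞) → (0,∞) be continuous, strictly increasing on the set where it is less than 1, with y(0) ∈ (0,1), and suppose y(r) > 1 for some r. Define ρ(r) = c_l r^{2l} ( g_{l+3/2} + g_{l+1/2} )( y(r) ) with c_l = 2π ∫₀¹ s^l (1−s)^{−1/2} ds. Then, with R₁ = sup{ r ≥ 0 : y(r) < 1 } ∈ (0,∞), one has ρ(r) > 0 for 0 < r < R₁ and ρ(r) = 0 for r > R₁; moreover if l = 0 then ρ is strictly decreasing on (0, R₁). -/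

import Mathlib

open Real MeasureTheory Filter Topology Set

/-!
Positivity of `ρ` inside `R₁` and its vanishing outside only use that `g_j > 0` on `(0,1)` and
`g_j = 0` on `[1,∞)`, together with the fact that `y` stays below `1` exactly on `[0,R₁)`: by the
intermediate value theorem, if `y(r) ≥ 1 > y(s)` with `r < s`, then `y` would take a value of
`(y(s),1)` at some point of `[r,s)`, against strict monotonicity. For `l = 0`, `ρ = c₀ (g_{3/2} +
g_{1/2}) ∘ y`, and `u ↦ g_j(u)` is strictly decreasing on `(0,1)` because `u^{-(2j+1)}` strictly
decreases while the integral `∫_u^1 φ(η)(η² − u²)^j dη` is positive and does not increase.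
-/

noncomputable def gfun (φ : ℝ → ℝ) (j u : ℝ) : ℝ :=
  if u ≤ 1 then u ^ (-(2 * j + 1)) * ∫ η in u..1, φ η * (η ^ 2 - u ^ 2) ^ j else 0

section Profile

variable {φ : ℝ → ℝ} {a b j k u : ℝ}

lemma intervalIntegrable_one_sub_rpow (hk : -1 < k) (a : ℝ) :
    IntervalIntegrable (fun η : ℝ => (1 - η) ^ k) volume a 1 := by
  simpa using ((intervalIntegral.intervalIntegrable_rpow' hk (a := 0) (b := 1 - a)).comp_sub_left
    1).symm

lemma intervalIntegrable_of_le_mul_one_sub_rpow {C : ℝ} (hφ_meas : Measurable φ)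
    (hφ_nonneg : ∀ η > 0, 0 ≤ φ η) (hk : -1 < k)
    (hφ_bound : ∀ η ∈ Ioo (0:ℝ) 1, φ η ≤ C * (1 - η) ^ k) :
    IntervalIntegrable φ volume 0 1 := by
  rw [intervalIntegrable_iff_integrableOn_Ioo_of_le zero_le_one]
  refine Integrable.mono' ((intervalIntegrable_iff_integrableOn_Ioo_of_le zero_le_one).1
    ((intervalIntegrable_one_sub_rpow hk 0).const_mul C)) hφ_meas.aestronglyMeasurable ?_
  filter_upwards [ae_restrict_mem measurableSet_Ioo] with η hη
  rw [Real.norm_of_nonneg (hφ_nonneg η hη.1)]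
  exact hφ_bound η hη

lemma IntervalIntegrable.mul_sq_sub_sq_rpow (hφ : IntervalIntegrable φ volume a b) (hj : 0 ≤ j)
    (u : ℝ) : IntervalIntegrable (fun η => φ η * (η ^ 2 - u ^ 2) ^ j) volume a b :=
  hφ.mul_continuousOn ((continuous_rpow_const hj).comp (by fun_prop)).continuousOn

lemma mul_sq_sub_sq_rpow_nonneg (hφ_nonneg : ∀ η > 0, 0 ≤ φ η) {η : ℝ} (hu : 0 ≤ u)
    (huη : u ≤ η) (hη : 0 < η) : 0 ≤ φ η * (η ^ 2 - u ^ 2) ^ j :=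
  mul_nonneg (hφ_nonneg η hη) (rpow_nonneg (by nlinarith) j)

lemma intervalIntegrable_mul_sq_sub_sq_rpow (hφ : IntervalIntegrable φ volume 0 1) (hj : 0 ≤ j)
    (ha : 0 ≤ a) (ha1 : a ≤ 1) (u : ℝ) :
    IntervalIntegrable (fun η => φ η * (η ^ 2 - u ^ 2) ^ j) volume a 1 :=
  (hφ.mono_set (by simp [uIcc_of_le ha1, Icc_subset_Icc ha le_rfl])).mul_sq_sub_sq_rpow hj u

lemma integral_mul_sq_sub_sq_rpow_pos (hφ : IntervalIntegrable φ volume 0 1)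
    (hφ_nonneg : ∀ η > 0, 0 ≤ φ η) {ε : ℝ} (hε : 0 < ε) (hφ_pos : ∀ η ∈ Ioo (1 - ε) 1, 0 < φ η)
    (hj : 0 ≤ j) (hu : 0 < u) (hu1 : u < 1) :
    0 < ∫ η in u..1, φ η * (η ^ 2 - u ^ 2) ^ j := by
  set m := max u (1 - ε)
  have hum : u ≤ m := le_max_left _ _
  have hm1 : m < 1 := max_lt hu1 (by linarith)
  calc 0 < ∫ η in m..1, φ η * (η ^ 2 - u ^ 2) ^ j := by
        refine intervalIntegral.intervalIntegral_pos_of_pos_on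
          (intervalIntegrable_mul_sq_sub_sq_rpow hφ hj (hu.le.trans hum) hm1.le u)
          (fun η hη => mul_pos (hφ_pos η ⟨(le_max_right _ _).trans_lt hη.1, hη.2⟩) ?_) hm1
        exact rpow_pos_of_pos (by nlinarith [hum.trans_lt hη.1]) j
    _ ≤ ∫ η in u..1, φ η * (η ^ 2 - u ^ 2) ^ j := by
        refine intervalIntegral.integral_mono_interval hum hm1.le le_rfl ?_
          (intervalIntegrable_mul_sq_sub_sq_rpow hφ hj hu.le hu1.le u)
        filter_upwards [ae_restrict_mem measurableSet_Ioc] with η hη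
        exact mul_sq_sub_sq_rpow_nonneg hφ_nonneg hu.le hη.1.le (hu.trans hη.1)

lemma integral_mul_sq_sub_sq_rpow_anti (hφ : IntervalIntegrable φ volume 0 1)
    (hφ_nonneg : ∀ η > 0, 0 ≤ φ η) (hj : 0 ≤ j) {u₁ u₂ : ℝ} (hu₁ : 0 < u₁) (h : u₁ ≤ u₂)
    (hu₂ : u₂ ≤ 1) :
    ∫ η in u₂..1, φ η * (η ^ 2 - u₂ ^ 2) ^ j ≤ ∫ η in u₁..1, φ η * (η ^ 2 - u₁ ^ 2) ^ j := by
  have hu₂0 : 0 ≤ u₂ := hu₁.le.trans h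
  calc ∫ η in u₂..1, φ η * (η ^ 2 - u₂ ^ 2) ^ j
      ≤ ∫ η in u₂..1, φ η * (η ^ 2 - u₁ ^ 2) ^ j := by
        refine intervalIntegral.integral_mono_on hu₂
          (intervalIntegrable_mul_sq_sub_sq_rpow hφ hj hu₂0 hu₂ u₂)
          (intervalIntegrable_mul_sq_sub_sq_rpow hφ hj hu₂0 hu₂ u₁) fun η hη => ?_
        exact mul_le_mul_of_nonneg_left (rpow_le_rpow (by nlinarith [hη.1]) (by nlinarith) hj)
          (hφ_nonneg η (hu₁.trans_le (h.trans hη.1)))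
    _ ≤ ∫ η in u₁..1, φ η * (η ^ 2 - u₁ ^ 2) ^ j := by
        refine intervalIntegral.integral_mono_interval h hu₂ le_rfl ?_
          (intervalIntegrable_mul_sq_sub_sq_rpow hφ hj hu₁.le (h.trans hu₂) u₁)
        filter_upwards [ae_restrict_mem measurableSet_Ioc] with η hη
        exact mul_sq_sub_sq_rpow_nonneg hφ_nonneg hu₁.le hη.1.le (hu₁.trans hη.1)

lemma gfun_of_one_le (hu : 1 ≤ u) : gfun φ j u = 0 := by
  rcases hu.eq_or_lt with rfl | h
  · simp [gfun]
  · simp [gfun, not_le.2 h]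

lemma gfun_pos (hφ : IntervalIntegrable φ volume 0 1) (hφ_nonneg : ∀ η > 0, 0 ≤ φ η) {ε : ℝ}
    (hε : 0 < ε) (hφ_pos : ∀ η ∈ Ioo (1 - ε) 1, 0 < φ η) (hj : 0 ≤ j) (hu : 0 < u)
    (hu1 : u < 1) : 0 < gfun φ j u := by
  rw [gfun, if_pos hu1.le]
  exact mul_pos (rpow_pos_of_pos hu _)
    (integral_mul_sq_sub_sq_rpow_pos hφ hφ_nonneg hε hφ_pos hj hu hu1)

lemma gfun_strictAntiOn (hφ : IntervalIntegrable φ volume 0 1) (hφ_nonneg : ∀ η > 0, 0 ≤ φ η)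
    {ε : ℝ} (hε : 0 < ε) (hφ_pos : ∀ η ∈ Ioo (1 - ε) 1, 0 < φ η) (hj : 0 ≤ j) :
    StrictAntiOn (gfun φ j) (Ioo 0 1) := by
  intro u₁ hu₁ u₂ hu₂ h
  rw [gfun, gfun, if_pos hu₁.2.le, if_pos hu₂.2.le]
  calc u₂ ^ (-(2 * j + 1)) * ∫ η in u₂..1, φ η * (η ^ 2 - u₂ ^ 2) ^ j
      < u₁ ^ (-(2 * j + 1)) * ∫ η in u₂..1, φ η * (η ^ 2 - u₂ ^ 2) ^ j :=
        mul_lt_mul_of_pos_right (rpow_lt_rpow_of_neg hu₁.1 h (by linarith))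
          (integral_mul_sq_sub_sq_rpow_pos hφ hφ_nonneg hε hφ_pos hj hu₂.1 hu₂.2)
    _ ≤ u₁ ^ (-(2 * j + 1)) * ∫ η in u₁..1, φ η * (η ^ 2 - u₁ ^ 2) ^ j :=
        mul_le_mul_of_nonneg_left
          (integral_mul_sq_sub_sq_rpow_anti hφ hφ_nonneg hj hu₁.1 h.le hu₂.2.le)
          (rpow_nonneg hu₁.1.le _)

end Profile

lemma integral_rpow_mul_one_sub_rpow_pos {l k : ℝ} (hl : 0 ≤ l) (hk : -1 < k) :
    0 < ∫ s in (0:ℝ)..1, s ^ l * (1 - s) ^ k :=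
  intervalIntegral.intervalIntegral_pos_of_pos_on
    ((intervalIntegrable_one_sub_rpow hk 0).continuousOn_mul (continuous_rpow_const hl).continuousOn)
    (fun _ hs => mul_pos (rpow_pos_of_pos hs.1 l) (rpow_pos_of_pos (sub_pos.2 hs.2) k))
    zero_lt_one

section SubunitSet

variable {y : ℝ → ℝ}

lemma lt_one_of_le_of_lt_one (hy_cont : ContinuousOn y (Ici 0))
    (hy_mono : StrictMonoOn y {r | 0 ≤ r ∧ y r < 1}) {r s : ℝ} (hr : 0 ≤ r) (hrs : r ≤ s)
    (hs : y s < 1) : y r < 1 := by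
  by_contra! hr1
  obtain ⟨t, ⟨hrt, hts⟩, hyt⟩ := intermediate_value_Icc' hrs
    (hy_cont.mono fun x hx => hr.trans hx.1)
    (show (y s + 1) / 2 ∈ Icc (y s) (y r) from ⟨by linarith, by linarith⟩)
  have hts' : t < s := hts.lt_of_ne (by rintro rfl; linarith)
  have := hy_mono ⟨hr.trans hrt, by linarith⟩ ⟨hr.trans hrs, hs⟩ hts'
  linarith

lemma bddAbove_setOf_lt_one (hy_cont : ContinuousOn y (Ici 0))
    (hy_mono : StrictMonoOn y {r | 0 ≤ r ∧ y r < 1}) {r₀ : ℝ} (hr₀ : 0 ≤ r₀) (hy : 1 ≤ y r₀) :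
    BddAbove {r | 0 ≤ r ∧ y r < 1} :=
  ⟨r₀, fun _ hs => le_of_not_gt fun h =>
    (lt_one_of_le_of_lt_one hy_cont hy_mono hr₀ h.le hs.2).not_ge hy⟩

lemma sSup_setOf_lt_one_pos (hy_cont : ContinuousOn y (Ici 0)) (hy0 : y 0 < 1)
    (hbdd : BddAbove {r | 0 ≤ r ∧ y r < 1}) : 0 < sSup {r | 0 ≤ r ∧ y r < 1} := by
  obtain ⟨u, hu0, hu⟩ :=
    mem_nhdsGE_iff_exists_Icc_subset.1 (hy_cont 0 self_mem_Ici (Iio_mem_nhds hy0))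
  exact hu0.trans_le (le_csSup hbdd ⟨hu0.le, hu ⟨hu0.le, le_rfl⟩⟩)

lemma Ioo_sSup_subset_setOf_lt_one (hy_cont : ContinuousOn y (Ici 0))
    (hy_mono : StrictMonoOn y {r | 0 ≤ r ∧ y r < 1}) (hy0 : y 0 < 1) :
    Ioo 0 (sSup {r | 0 ≤ r ∧ y r < 1}) ⊆ {r | 0 ≤ r ∧ y r < 1} := fun r hr => by
  obtain ⟨s, hs, hrs⟩ := exists_lt_of_lt_csSup ⟨0, (⟨le_rfl, hy0⟩ : 0 ≤ (0:ℝ) ∧ y 0 < 1)⟩ hr.2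
  exact ⟨hr.1.le, lt_one_of_le_of_lt_one hy_cont hy_mono hr.1.le hrs.le hs.2⟩

lemma one_le_of_sSup_setOf_lt_one_lt (hbdd : BddAbove {r | 0 ≤ r ∧ y r < 1}) {r : ℝ}
    (hr0 : 0 ≤ r) (h : sSup {r | 0 ≤ r ∧ y r < 1} < r) : 1 ≤ y r :=
  le_of_not_gt fun h1 => (le_csSup hbdd ⟨hr0, h1⟩).not_gt h

end SubunitSet

theorem nonshell_support_general
    (l : ℝ) (hl : 0 ≤ l)
    (φ : ℝ → ℝ) (hφ_meas : Measurable φ) (hφ_nonneg : ∀ η > 0, 0 ≤ φ η)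
    (C k : ℝ) (hk : -1 < k)
    (hφ_bound : ∀ η ∈ Ioo (0:ℝ) 1, φ η ≤ C * (1 - η) ^ k)
    (hφ_pos : ∃ ε₀ ∈ Ioo (0:ℝ) 1, ∀ η ∈ Ioo (1 - ε₀) 1, 0 < φ η)
    (y : ℝ → ℝ) (hy_cont : ContinuousOn y (Ici 0))
    (hy_mono : StrictMonoOn y {r | 0 ≤ r ∧ y r < 1})
    (hy0 : y 0 ∈ Ioo (0:ℝ) 1)
    (hy_big : ∃ r ≥ 0, 1 < y r)
    (cl : ℝ) (hcl : cl = 2 * π * ∫ s in (0:ℝ)..1, s ^ l * (1 - s) ^ (-(1 / 2) : ℝ))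
    (ρ : ℝ → ℝ)
    (hρ : ∀ r, ρ r = cl * r ^ (2 * l) *
      (gfun φ (l + 3 / 2) (y r) + gfun φ (l + 1 / 2) (y r))) :
    BddAbove {r | 0 ≤ r ∧ y r < 1} ∧
    0 < sSup {r | 0 ≤ r ∧ y r < 1} ∧
    (∀ r, 0 < r → r < sSup {r | 0 ≤ r ∧ y r < 1} → 0 < ρ r) ∧
    (∀ r, sSup {r | 0 ≤ r ∧ y r < 1} < r → ρ r = 0) ∧
    (l = 0 → StrictAntiOn ρ (Ioo 0 (sSup {r | 0 ≤ r ∧ y r < 1}))) := by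
  obtain ⟨ε₀, hε₀, hφ_pos⟩ := hφ_pos
  obtain ⟨r₀, hr₀, hyr₀⟩ := hy_big
  have hφ_int := intervalIntegrable_of_le_mul_one_sub_rpow hφ_meas hφ_nonneg hk hφ_bound
  have hbdd := bddAbove_setOf_lt_one hy_cont hy_mono hr₀ hyr₀.le
  have hR₁ := sSup_setOf_lt_one_pos hy_cont hy0.2 hbdd
  have hsub := Ioo_sSup_subset_setOf_lt_one hy_cont hy_mono hy0.2
  have hy_mem : MapsTo y (Ioo 0 (sSup {r | 0 ≤ r ∧ y r < 1})) (Ioo 0 1) := fun r hr =>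
    ⟨hy0.1.trans (hy_mono ⟨le_rfl, hy0.2⟩ (hsub hr) hr.1), (hsub hr).2⟩
  have hcl_pos : 0 < cl :=
    hcl ▸ mul_pos (by positivity) (integral_rpow_mul_one_sub_rpow_pos hl (by norm_num))
  have hj₃ : 0 ≤ l + 3 / 2 := by linarith
  have hj₁ : 0 ≤ l + 1 / 2 := by linarith
  refine ⟨hbdd, hR₁, fun r hr hrR => ?_, fun r hr => ?_, ?_⟩
  · obtain ⟨hyr0, hyr1⟩ := hy_mem ⟨hr, hrR⟩
    rw [hρ]
    exact mul_pos (mul_pos hcl_pos (rpow_pos_of_pos hr _))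
      (add_pos (gfun_pos hφ_int hφ_nonneg hε₀.1 hφ_pos hj₃ hyr0 hyr1)
        (gfun_pos hφ_int hφ_nonneg hε₀.1 hφ_pos hj₁ hyr0 hyr1))
  · have hyr := one_le_of_sSup_setOf_lt_one_lt hbdd (hR₁.trans hr).le hr
    rw [hρ, gfun_of_one_le hyr, gfun_of_one_le hyr, add_zero, mul_zero]
  · rintro rfl a ha b hb hab
    have hy_ab := (hy_mono.mono hsub) ha hb hab
    simp only [hρ, mul_zero, rpow_zero, mul_one]
    exact mul_lt_mul_of_pos_left (add_lt_add
      (gfun_strictAntiOn hφ_int hφ_nonneg hε₀.1 hφ_pos hj₃ (hy_mem ha) (hy_mem hb) hy_ab)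
      (gfun_strictAntiOn hφ_int hφ_nonneg hε₀.1 hφ_pos hj₁ (hy_mem ha) (hy_mem hb) hy_ab))
      hcl_pos

/-- Observations 3.2 and 3.3: for `L₀ = 0` the support of the energy density
`ρ(r) = c_l r^{2l}(g_{l+3/2} + g_{l+1/2})(y(r))` is an interval `[0,R₁]` (a non-shell),
and in the isotropic case `l = 0` the energy density is strictly decreasing on `(0,R₁)`. -/
theorem nonshell_support
    (l : ℝ) (hl : 0 ≤ l)
    (φ : ℝ → ℝ) (hφ_meas : Measurable φ) (hφ_nonneg : ∀ η > 0, 0 ≤ φ η)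
    (hφ_zero : ∀ η > 1, φ η = 0)
    (C k : ℝ) (hC : 0 < C) (hk : -1 < k)
    (hφ_bound : ∀ η ∈ Ioo (0:ℝ) 1, φ η ≤ C * (1 - η) ^ k)
    (hφ_pos : ∃ ε₀ ∈ Ioo (0:ℝ) 1, ∀ η ∈ Ioo (1 - ε₀) 1, 0 < φ η)
    (y : ℝ → ℝ) (hy_cont : ContinuousOn y (Ici 0))
    (hy_mono : StrictMonoOn y {r | 0 ≤ r ∧ y r < 1})
    (hy0 : y 0 ∈ Ioo (0:ℝ) 1)
    (hy_big : ∃ r ≥ 0, 1 < y r)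
    (cl : ℝ) (hcl : cl = 2 * π * ∫ s in (0:ℝ)..1, s ^ l * (1 - s) ^ (-(1 / 2) : ℝ))
    (ρ : ℝ → ℝ)
    (hρ : ∀ r, ρ r = cl * r ^ (2 * l) *
      (gfun φ (l + 3 / 2) (y r) + gfun φ (l + 1 / 2) (y r))) :
    BddAbove {r | 0 ≤ r ∧ y r < 1} ∧
    0 < sSup {r | 0 ≤ r ∧ y r < 1} ∧
    (∀ r, 0 < r → r < sSup {r | 0 ≤ r ∧ y r < 1} → 0 < ρ r) ∧
    (∀ r, sSup {r | 0 ≤ r ∧ y r < 1} < r → ρ r = 0) ∧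
    (l = 0 → StrictAntiOn ρ (Ioo 0 (sSup {r | 0 ≤ r ∧ y r < 1}))) :=
  nonshell_support_general l hl φ hφ_meas hφ_nonneg C k hk hφ_bound hφ_pos y hy_cont hy_mono hy0
    hy_big cl hcl ρ hρ
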